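/- β-normal annotation-free well-typed terms need no annotations: for every typing context Γ, term e, and simple type A, if Γ ⊢ e : A is derivable in the type assignment system and e is annotation-free and β-normal, then Γ ⊢ e ⇐ A is derivable in the bidirectional system; if moreover e is neutral (a variable or an application), then Γ ⊢ e ⇒ A is derivable in the bidirectional system. -/
import Mathlib


/-- Simple types: `unit` and function types. -/
inductive Ty : Type
  | unit : Ty
  | arr : Ty → Ty → Ty
deriving DecidableEq

/-- Terms (de Bruijn indices): variables, λ-abstraction, application,
    the unit term `()`, and type annotations `(e : A)`. -/
inductive Tm : Type
  | var : Nat → Tm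
  | lam : Tm → Tm
  | app : Tm → Tm → Tm
  | unit : Tm
  | anno : Tm → Ty → Tm
deriving DecidableEq

/-- Type assignment system `Γ ⊢ e : A`.  Contexts are lists of types,
    indexed by de Bruijn variables. -/
inductive Assign : List Ty → Tm → Ty → Prop
  | var {Γ : List Ty} {n : Nat} {A : Ty} :
      Γ[n]? = some A → Assign Γ (.var n) A
  | anno {Γ e A} :
      Assign Γ e A → Assign Γ (.anno e A) A
  | unit {Γ} : Assign Γ .unit .unit
  | lam {Γ e A₁ A₂} :
      Assign (A₁ :: Γ) e A₂ → Assign Γ (.lam e) (.arr A₁ A₂)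
  | app {Γ e₁ e₂ A B} :
      Assign Γ e₁ (.arr A B) → Assign Γ e₂ A → Assign Γ (.app e₁ e₂) B

mutual
  /-- Synthesis judgment `Γ ⊢ e ⇒ A`. -/
  inductive Syn : List Ty → Tm → Ty → Prop
    | var {Γ : List Ty} {n : Nat} {A : Ty} :
        Γ[n]? = some A → Syn Γ (.var n) A
    | anno {Γ e A} :
        Chk Γ e A → Syn Γ (.anno e A) A
    | app {Γ e₁ e₂ A B} :
        Syn Γ e₁ (.arr A B) → Chk Γ e₂ A → Syn Γ (.app e₁ e₂) B

  /-- Checking judgment `Γ ⊢ e ⇐ A`. -/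
  inductive Chk : List Ty → Tm → Ty → Prop
    | sub {Γ e A B} :
        Syn Γ e A → A = B → Chk Γ e B
    | unit {Γ} : Chk Γ .unit .unit
    | lam {Γ e A₁ A₂} :
        Chk (A₁ :: Γ) e A₂ → Chk Γ (.lam e) (.arr A₁ A₂)
end

/-- `e` is annotation-free: it contains no subterm of the form `(e' : A)`. -/
def AnnoFree : Tm → Prop
  | .var _ => True
  | .lam e => AnnoFree e
  | .app e₁ e₂ => AnnoFree e₁ ∧ AnnoFree e₂
  | .unit => True
  | .anno _ _ => False

/-- `e` is β-normal: it contains no subterm of the form `(λx.e₁) e₂`. -/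
def BetaNormal : Tm → Prop
  | .var _ => True
  | .lam e => BetaNormal e
  | .app e₁ e₂ => (∀ e' : Tm, e₁ ≠ .lam e') ∧ BetaNormal e₁ ∧ BetaNormal e₂
  | .unit => True
  | .anno e _ => BetaNormal e

/-- `e` is neutral: a variable or an application. -/
def Neutral : Tm → Prop
  | .var _ => True
  | .app _ _ => True
  | _ => False

/-- β-normal annotation-free well-typed terms need no annotations. -/
theorem beta_normal_needs_no_annotations (Γ : List Ty) (e : Tm) (A : Ty)
    (h : Assign Γ e A) (hfree : AnnoFree e) (hnorm : BetaNormal e) :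
    Chk Γ e A ∧ (Neutral e → Syn Γ e A) := by
  induction h with
  | var h => exact ⟨Chk.sub (Syn.var h) rfl, fun _ => Syn.var h⟩
  | anno _ _ => exact absurd hfree id
  | unit => exact ⟨Chk.unit, fun h => absurd h id⟩
  | lam _ ih =>
    exact ⟨Chk.lam (ih hfree hnorm).1, fun h => absurd h id⟩
  | app h1 h2 ih1 ih2 =>
    rename_i Γ' e₁ e₂ A' B'
    obtain ⟨hf1, hf2⟩ := hfree
    obtain ⟨hne, hn1, hn2⟩ := hnorm
    have hneu : Neutral e₁ := by
      rcases h1 with _ | _ | _ | _ | _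
      case var => trivial
      case anno => exact absurd hf1 id
      case lam => exact absurd rfl (hne _)
      case app => trivial
    have s1 := (ih1 hf1 hn1).2 hneu
    exact ⟨Chk.sub (Syn.app s1 (ih2 hf2 hn2).1) rfl,
      fun _ => Syn.app s1 (ih2 hf2 hn2).1⟩
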